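/- arXiv:2310.09351 — 2 statements merged into one kernel-verified Lean document; each statement's English description precedes it below -/
import Mathlib

section
/- Let k > 0, n = k+1, and let Φ : [0,∞) → [0,∞) be a strictly convex C¹ function with Φ(0) = Φ'(0) = 0. If there are constants c₁, c₂ > 0 with c₁ x^{1+1/k} ≤ Φ(x) ≤ c₂ x^{1+1/k} for all x ≥ 0, then there are constants C₁, C₂ > 0 with C₁ x^{1+1/n} ≤ Ψ(x) ≤ C₂ x^{1+1/n} for all x ≥ 0. -/
open MeasureTheory Filter Real Set
open scoped Topology ENNReal NNReal RealInnerProductSpace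

noncomputable section

abbrev Plane : Type := EuclideanSpace ℝ (Fin 2)
abbrev Phase : Type := Plane × Plane

/-- Gravitational potential induced by a density on the plane. -/
def Upot (ρ : Plane → ℝ) (x : Plane) : ℝ := -∫ y : Plane, ρ y / dist x y

/-- Kinetic energy. -/
def Ekin (f : Phase → ℝ) : ℝ := ∫ p : Phase, (‖p.2‖ ^ 2 / 2) * f p

/-- Casimir functional. -/
def Casimir (Φ : ℝ → ℝ) (f : Phase → ℝ) : ℝ := ∫ p : Phase, Φ (f p)

/-- Spatial density induced by a phase-space density. -/
def spatialDensity (f : Phase → ℝ) (x : Plane) : ℝ := ∫ v : Plane, f (x, v)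

/-- Self-interaction potential energy. -/
def Epot1 (ρ : Plane → ℝ) : ℝ := -(1 / 2) * ∫ x : Plane, ∫ y : Plane, ρ x * ρ y / dist x y

/-- External potential energy. -/
def EpotExt (ρext ρ : Plane → ℝ) : ℝ := -∫ x : Plane, ∫ y : Plane, ρ x * ρext y / dist x y

/-- Total potential energy. -/
def Epot (ρext ρ : Plane → ℝ) : ℝ := Epot1 ρ + EpotExt ρext ρ

/-- Casimir-Energy functional. -/
def EC (Φ : ℝ → ℝ) (ρext : Plane → ℝ) (f : Phase → ℝ) : ℝ :=
  Ekin f + Epot ρext (spatialDensity f) + Casimir Φ f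

/-- The feasible set `F_M`. -/
def FM (Φ : ℝ → ℝ) (M : ℝ) : Set (Phase → ℝ) :=
  {f | Integrable f ∧ (∀ p, 0 ≤ f p) ∧
       Integrable (fun p : Phase => (‖p.2‖ ^ 2 / 2) * f p) ∧
       Integrable (fun p : Phase => Φ (f p)) ∧
       (∫ p : Phase, f p) = M}

/-- The integrand functional defining `Ψ`. -/
def Ifun (Φ : ℝ → ℝ) (g : Plane → ℝ) : ℝ := ∫ v : Plane, ((‖v‖ ^ 2 / 2) * g v + Φ (g v))

/-- The constraint set for `Ψ`. -/
def Gset (Φ : ℝ → ℝ) (r : ℝ) : Set (Plane → ℝ) :=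
  {g | Integrable g ∧ (∀ v, 0 ≤ g v) ∧
       Integrable (fun v : Plane => (‖v‖ ^ 2 / 2) * g v + Φ (g v)) ∧
       (∫ v : Plane, g v) = r}

/-- The reduced Casimir function `Ψ`. -/
def Psi (Φ : ℝ → ℝ) (r : ℝ) : ℝ := sInf (Ifun Φ '' Gset Φ r)

/-- The reduced feasible set `F_M^r`. -/
def FMr (Φ : ℝ → ℝ) (M : ℝ) : Set (Plane → ℝ) :=
  {ρ | Integrable ρ ∧ (∀ x, 0 ≤ ρ x) ∧ MemLp ρ (ENNReal.ofReal (4 / 3)) ∧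
       Integrable (fun x => Psi Φ (ρ x)) ∧ (∫ x : Plane, ρ x) = M}

/-- The reduced Casimir-Energy functional. -/
def ECr (Φ : ℝ → ℝ) (ρext ρ : Plane → ℝ) : ℝ :=
  (∫ x : Plane, Psi Φ (ρ x)) + Epot ρext ρ

/-- The infimum of the reduced problem. -/
def IM (Φ : ℝ → ℝ) (ρext : Plane → ℝ) (M : ℝ) : ℝ := sInf (ECr Φ ρext '' FMr Φ M)

/-- Inverse of the derivative (on `[0,∞)`) of a function, extended by `0` on `(-∞,0]`. -/
def invDerivOn (F : ℝ → ℝ) (y : ℝ) : ℝ :=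
  if y ≤ 0 then 0 else Function.invFun (derivWithin F (Set.Ici 0)) y

/-- A density on the plane is spherically symmetric and nonincreasing. -/
def SphSymmDecr (ρ : Plane → ℝ) : Prop :=
  ∃ φ : ℝ → ℝ, AntitoneOn φ (Set.Ici 0) ∧ (∀ r ∈ Set.Ici (0 : ℝ), 0 ≤ φ r) ∧
    ∀ x : Plane, ρ x = φ ‖x‖

/-- A density on the plane is strictly symmetric decreasing. -/
def StrictSphSymmDecr (ρ : Plane → ℝ) : Prop :=
  ∃ φ : ℝ → ℝ, StrictAntiOn φ (Set.Ici 0) ∧ (∀ r ∈ Set.Ici (0 : ℝ), 0 ≤ φ r) ∧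
    ∀ x : Plane, ρ x = φ ‖x‖

/-- Weak convergence in `L^p`, tested against all elements of the dual `L^q`. -/
def TendstoWeakly {α : Type*} [MeasurableSpace α] (μ : Measure α) (q : ℝ)
    (ρ : ℕ → α → ℝ) (ρ₀ : α → ℝ) : Prop :=
  ∀ g : α → ℝ, MemLp g (ENNReal.ofReal q) μ →
    Tendsto (fun i => ∫ x, ρ i x * g x ∂μ) atTop (𝓝 (∫ x, ρ₀ x * g x ∂μ))

/-- Boundedness of a sequence in `L^p`. -/
def BoundedLp {α : Type*} [MeasurableSpace α] (μ : Measure α) (p : ℝ)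
    (ρ : ℕ → α → ℝ) : Prop :=
  ∃ C : ℝ, ∀ i, eLpNorm (ρ i) (ENNReal.ofReal p) μ ≤ ENNReal.ofReal C

/-!
Upper bound: spread the mass `x` uniformly over the disc of radius `R` with `R ^ 2 = x ^ (1 / n)`;
this balances the kinetic term `x R ^ 2 / 2` against
`π R ^ 2 Φ (x / (π R ^ 2)) ≤ c₂ π ^ (-1/k) x ^ (1 + 1/k) R ^ (-2/k)`.

Lower bound: let `g` have mass `x`, `T = ∫ |v|² g ≤ 2 Ψ` and `A = ∫ g ^ (1 + 1/k) ≤ Ψ / c₁`.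
Outside the disc of radius `R` lies at most `T / R ^ 2` of the mass (Chebyshev), inside at most
`A ^ (k/n) (π R ^ 2) ^ (1/n)` (Hölder with exponents `1 + 1/k` and `n`). For `R ^ 2 = 2 T / x`
the first is `x / 2`, so `(x / 2) ^ n ≤ A ^ k · 2 π T / x`, i.e. `x ^ (n + 1) ≲ Ψ ^ n`.
-/

open Metric

section Holder

variable {α : Type*} [MeasurableSpace α] {μ : Measure α} {g : α → ℝ}

lemma setIntegral_le_Lp_mul_measureReal_rpow {p q : ℝ} (hpq : p.HolderConjugate q) (hg : 0 ≤ g)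
    (hgp : MemLp g (ENNReal.ofReal p) μ) {s : Set α} (hs : MeasurableSet s) (hμs : μ s ≠ ∞) :
    ∫ v in s, g v ∂μ ≤ (∫ v, g v ^ p ∂μ) ^ (1 / p) * μ.real s ^ (1 / q) := by
  have hind_pow : (fun v => s.indicator (1 : α → ℝ) v ^ q) = s.indicator 1 := by
    funext v
    by_cases hv : v ∈ s <;> simp [hv, Real.zero_rpow hpq.symm.pos.ne']
  calc ∫ v in s, g v ∂μ = ∫ v, g v * s.indicator 1 v ∂μ := by
        rw [← integral_indicator hs]
        congr 1 with v
        by_cases hv : v ∈ s <;> simp [hv]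
    _ ≤ (∫ v, g v ^ p ∂μ) ^ (1 / p) * (∫ v, s.indicator (1 : α → ℝ) v ^ q ∂μ) ^ (1 / q) :=
        integral_mul_le_Lp_mul_Lq_of_nonneg hpq (ae_of_all _ hg)
          (ae_of_all _ (Set.indicator_nonneg fun _ _ => zero_le_one)) hgp
          (memLp_indicator_const _ hs 1 (Or.inr hμs))
    _ = (∫ v, g v ^ p ∂μ) ^ (1 / p) * μ.real s ^ (1 / q) := by
        rw [hind_pow, integral_indicator_one hs]

end Holder

section MassSplitting

variable {E : Type*} [NormedAddCommGroup E] [MeasurableSpace E] [OpensMeasurableSpace E]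
  {μ : Measure E} {g : E → ℝ}

lemma setIntegral_compl_closedBall_le (hg : 0 ≤ g) (hgi : Integrable g μ)
    (hm : Integrable (fun v => ‖v‖ ^ 2 * g v) μ) {R : ℝ} (hR : 0 < R) :
    ∫ v in (closedBall 0 R)ᶜ, g v ∂μ ≤ (∫ v, ‖v‖ ^ 2 * g v ∂μ) / R ^ 2 := by
  rw [le_div_iff₀ (by positivity), ← integral_mul_const]
  calc ∫ v in (closedBall 0 R)ᶜ, g v * R ^ 2 ∂μ ≤ ∫ v in (closedBall 0 R)ᶜ, ‖v‖ ^ 2 * g v ∂μ := by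
        refine setIntegral_mono_on (hgi.mul_const _).integrableOn hm.integrableOn
          measurableSet_closedBall.compl fun v hv => ?_
        have hRv : R < ‖v‖ := by simpa using hv
        rw [mul_comm]
        exact mul_le_mul_of_nonneg_right (pow_le_pow_left₀ hR.le hRv.le 2) (hg v)
    _ ≤ ∫ v, ‖v‖ ^ 2 * g v ∂μ :=
        setIntegral_le_integral hm (ae_of_all _ fun v => mul_nonneg (sq_nonneg _) (hg v))

lemma integral_le_Lp_mul_measureReal_closedBall_add {p q : ℝ} (hpq : p.HolderConjugate q)
    (hg : 0 ≤ g) (hgi : Integrable g μ) (hgp : MemLp g (ENNReal.ofReal p) μ)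
    (hm : Integrable (fun v => ‖v‖ ^ 2 * g v) μ) {R : ℝ} (hR : 0 < R)
    (hμR : μ (closedBall 0 R) ≠ ∞) :
    ∫ v, g v ∂μ ≤ (∫ v, g v ^ p ∂μ) ^ (1 / p) * μ.real (closedBall 0 R) ^ (1 / q)
      + (∫ v, ‖v‖ ^ 2 * g v ∂μ) / R ^ 2 := by
  rw [← integral_add_compl measurableSet_closedBall hgi]
  gcongr
  · exact setIntegral_le_Lp_mul_measureReal_rpow hpq hg hgp measurableSet_closedBall hμR
  · exact setIntegral_compl_closedBall_le hg hgi hm hR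

end MassSplitting

lemma measureReal_closedBall_plane (x : Plane) {R : ℝ} (hR : 0 ≤ R) :
    volume.real (closedBall x R) = π * R ^ 2 := by
  rw [measureReal_def, EuclideanSpace.volume_closedBall_fin_two, ENNReal.toReal_mul,
    ENNReal.toReal_pow, ENNReal.toReal_ofReal hR, ENNReal.toReal_ofReal pi_pos.le, mul_comm]

section ReducedCasimir

variable {Φ : ℝ → ℝ} {r : ℝ} {g : Plane → ℝ}

lemma Ifun_nonneg (hΦ : ∀ x, 0 ≤ x → 0 ≤ Φ x) (hg : ∀ v, 0 ≤ g v) : 0 ≤ Ifun Φ g :=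
  integral_nonneg fun v => add_nonneg (mul_nonneg (by positivity) (hg v)) (hΦ _ (hg v))

lemma Psi_nonneg (hΦ : ∀ x, 0 ≤ x → 0 ≤ Φ x) : 0 ≤ Psi Φ r :=
  Real.sInf_nonneg <| by
    rintro _ ⟨g, hg, rfl⟩
    exact Ifun_nonneg hΦ hg.2.1

lemma Psi_le_Ifun (hΦ : ∀ x, 0 ≤ x → 0 ≤ Φ x) (hg : g ∈ Gset Φ r) : Psi Φ r ≤ Ifun Φ g :=
  csInf_le ⟨0, by rintro _ ⟨g, hg, rfl⟩; exact Ifun_nonneg hΦ hg.2.1⟩ ⟨g, hg, rfl⟩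

namespace Gset

lemma integrable_kinetic (hΦ : ∀ x, 0 ≤ x → 0 ≤ Φ x) (hg : g ∈ Gset Φ r) :
    Integrable fun v : Plane => ‖v‖ ^ 2 * g v := by
  refine (hg.2.2.1.const_mul 2).mono'
    ((continuous_norm.pow 2).aestronglyMeasurable.mul hg.1.1) (ae_of_all _ fun v => ?_)
  have := hΦ _ (hg.2.1 v)
  rw [Real.norm_of_nonneg (mul_nonneg (sq_nonneg _) (hg.2.1 v))]
  linarith

lemma integrable_comp (hΦ : ∀ x, 0 ≤ x → 0 ≤ Φ x) (hg : g ∈ Gset Φ r) :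
    Integrable fun v => Φ (g v) :=
  (hg.2.2.1.sub ((integrable_kinetic hΦ hg).div_const 2)).congr <|
    ae_of_all _ fun v => by simp only [Pi.sub_apply]; ring

lemma Ifun_eq_add (hΦ : ∀ x, 0 ≤ x → 0 ≤ Φ x) (hg : g ∈ Gset Φ r) :
    Ifun Φ g = (∫ v, ‖v‖ ^ 2 * g v) / 2 + ∫ v, Φ (g v) := by
  rw [← integral_div, ← integral_add ((integrable_kinetic hΦ hg).div_const 2)
    (integrable_comp hΦ hg), Ifun]
  congr 1 with v
  ring

lemma integral_kinetic_pos (hΦ : ∀ x, 0 ≤ x → 0 ≤ Φ x) (hg : g ∈ Gset Φ r) (hr : r ≠ 0) :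
    0 < ∫ v, ‖v‖ ^ 2 * g v := by
  refine (integral_nonneg fun v => mul_nonneg (sq_nonneg _) (hg.2.1 v)).lt_of_ne' fun h => hr ?_
  have hkin : (fun v : Plane => ‖v‖ ^ 2 * g v) =ᵐ[volume] 0 :=
    (integral_eq_zero_iff_of_nonneg (fun v => mul_nonneg (sq_nonneg _) (hg.2.1 v))
      (integrable_kinetic hΦ hg)).1 h
  have hg0 : g =ᵐ[volume] 0 := by
    filter_upwards [hkin, compl_mem_ae_iff.2 (measure_singleton (0 : Plane))] with v hv hv0
    exact (mul_eq_zero.1 hv).resolve_left (by simpa using hv0)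
  rw [← hg.2.2.2, integral_congr_ae hg0]
  simp

variable {p c : ℝ}

lemma integrable_rpow (hp : 0 ≤ p) (hc : 0 < c) (hΦ : ∀ x, 0 ≤ x → 0 ≤ Φ x)
    (hlow : ∀ x, 0 ≤ x → c * x ^ p ≤ Φ x) (hg : g ∈ Gset Φ r) :
    Integrable fun v => g v ^ p := by
  refine ((integrable_comp hΦ hg).div_const c).mono'
    ((continuous_rpow_const hp).comp_aestronglyMeasurable hg.1.1) (ae_of_all _ fun v => ?_)
  rw [Real.norm_of_nonneg (rpow_nonneg (hg.2.1 v) p), le_div_iff₀ hc, mul_comm]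
  exact hlow _ (hg.2.1 v)

lemma mul_integral_rpow_le (hp : 0 ≤ p) (hc : 0 < c) (hΦ : ∀ x, 0 ≤ x → 0 ≤ Φ x)
    (hlow : ∀ x, 0 ≤ x → c * x ^ p ≤ Φ x) (hg : g ∈ Gset Φ r) :
    c * ∫ v, g v ^ p ≤ ∫ v, Φ (g v) := by
  rw [← integral_const_mul]
  exact integral_mono ((integrable_rpow hp hc hΦ hlow hg).const_mul c) (integrable_comp hΦ hg)
    fun v => hlow _ (hg.2.1 v)

lemma memLp (hp : 0 < p) (hc : 0 < c) (hΦ : ∀ x, 0 ≤ x → 0 ≤ Φ x)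
    (hlow : ∀ x, 0 ≤ x → c * x ^ p ≤ Φ x) (hg : g ∈ Gset Φ r) :
    MemLp g (ENNReal.ofReal p) := by
  have hp0 : ENNReal.ofReal p ≠ 0 := by simpa using hp
  rw [← memLp_norm_rpow_iff hg.1.1 hp0 ENNReal.ofReal_ne_top, ENNReal.toReal_ofReal hp.le,
    ENNReal.div_self hp0 ENNReal.ofReal_ne_top, memLp_one_iff_integrable]
  exact (integrable_rpow hp.le hc hΦ hlow hg).congr
    (ae_of_all _ fun v => by simp only [Real.norm_of_nonneg (hg.2.1 v)])

end Gset

end ReducedCasimir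

def uniformBallDensity (m R : ℝ) : Plane → ℝ :=
  (closedBall 0 R).indicator fun _ => m / (π * R ^ 2)

section UniformBallDensity

variable {Φ : ℝ → ℝ} {m R : ℝ}

lemma uniformBallDensity_integrand (hΦ0 : Φ 0 = 0) :
    (fun v : Plane => ‖v‖ ^ 2 / 2 * uniformBallDensity m R v + Φ (uniformBallDensity m R v)) =
      (closedBall 0 R).indicator
        fun v => ‖v‖ ^ 2 / 2 * (m / (π * R ^ 2)) + Φ (m / (π * R ^ 2)) := by
  funext v
  by_cases hv : v ∈ closedBall (0 : Plane) R <;> simp [uniformBallDensity, hv, hΦ0]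

lemma uniformBallDensity_mem_Gset (hΦ0 : Φ 0 = 0) (hm : 0 ≤ m) (hR : 0 < R) :
    uniformBallDensity m R ∈ Gset Φ m := by
  refine ⟨(integrable_indicator_iff measurableSet_closedBall).2 (integrableOn_const
      (measure_closedBall_lt_top.ne)), fun v => Set.indicator_nonneg (fun _ _ => by positivity) v,
    ?_, ?_⟩
  · rw [uniformBallDensity_integrand hΦ0, integrable_indicator_iff measurableSet_closedBall]
    exact ContinuousOn.integrableOn_compact (isCompact_closedBall 0 R) (by fun_prop)
  · rw [uniformBallDensity, integral_indicator_const _ measurableSet_closedBall,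
      measureReal_closedBall_plane 0 hR.le, smul_eq_mul]
    field_simp

lemma Ifun_uniformBallDensity_le (hΦ0 : Φ 0 = 0) (hm : 0 ≤ m) (hR : 0 < R) :
    Ifun Φ (uniformBallDensity m R) ≤ m * R ^ 2 / 2 + π * R ^ 2 * Φ (m / (π * R ^ 2)) := by
  have hint := (uniformBallDensity_mem_Gset (Φ := Φ) hΦ0 hm hR).2.2.1
  rw [uniformBallDensity_integrand hΦ0,
    integrable_indicator_iff measurableSet_closedBall] at hint
  set h : ℝ := m / (π * R ^ 2) with hh
  calc Ifun Φ (uniformBallDensity m R)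
      = ∫ v in closedBall (0 : Plane) R, ‖v‖ ^ 2 / 2 * h + Φ h := by
        rw [Ifun, uniformBallDensity_integrand hΦ0, integral_indicator measurableSet_closedBall]
    _ ≤ ∫ _ in closedBall (0 : Plane) R, R ^ 2 / 2 * h + Φ h := by
        refine setIntegral_mono_on hint (integrableOn_const measure_closedBall_lt_top.ne)
          measurableSet_closedBall fun v hv => ?_
        have hvR : ‖v‖ ≤ R := by simpa using hv
        gcongr
    _ = m * R ^ 2 / 2 + π * R ^ 2 * Φ h := by
        rw [setIntegral_const, measureReal_closedBall_plane 0 hR.le, smul_eq_mul, hh]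
        field_simp

lemma Psi_le_of_uniformBallDensity (hΦ : ∀ x, 0 ≤ x → 0 ≤ Φ x) (hΦ0 : Φ 0 = 0) (hm : 0 ≤ m)
    (hR : 0 < R) : Psi Φ m ≤ m * R ^ 2 / 2 + π * R ^ 2 * Φ (m / (π * R ^ 2)) :=
  (Psi_le_Ifun hΦ (uniformBallDensity_mem_Gset hΦ0 hm hR)).trans
    (Ifun_uniformBallDensity_le hΦ0 hm hR)

end UniformBallDensity

lemma Psi_le_rpow {Φ : ℝ → ℝ} {k c₂ : ℝ} (hk : 0 < k) (hΦ : ∀ x, 0 ≤ x → 0 ≤ Φ x)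
    (hΦ0 : Φ 0 = 0) (hupp : ∀ x, 0 ≤ x → Φ x ≤ c₂ * x ^ (1 + 1 / k)) {x : ℝ} (hx : 0 ≤ x) :
    Psi Φ x ≤ (1 / 2 + c₂ * π ^ (-(1 / k))) * x ^ (1 + 1 / (k + 1)) := by
  rcases hx.eq_or_lt with rfl | hx
  · have := Psi_le_of_uniformBallDensity hΦ hΦ0 le_rfl one_pos
    rw [zero_rpow (by positivity)]
    simpa [hΦ0] using this
  have hR2 : (x ^ (1 / (2 * (k + 1)))) ^ 2 = x ^ (1 / (k + 1)) := by
    rw [← rpow_natCast, ← rpow_mul hx.le]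
    congr 1
    field_simp
    norm_num
  refine (Psi_le_of_uniformBallDensity hΦ hΦ0 hx.le
    (rpow_pos_of_pos hx (1 / (2 * (k + 1))))).trans ?_
  rw [hR2]
  set W := π * x ^ (1 / (k + 1)) with hW
  have hWpos : 0 < W := by positivity
  have hWpow : W / W ^ (1 + 1 / k) = W ^ (-(1 / k)) := by
    rw [div_eq_mul_inv, ← rpow_neg hWpos.le, mul_comm, ← rpow_add_one hWpos.ne']
    ring_nf
  have hterm : W * (x / W) ^ (1 + 1 / k) = π ^ (-(1 / k)) * x ^ (1 + 1 / (k + 1)) := by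
    rw [div_rpow hx.le hWpos.le, mul_div_left_comm, hWpow, hW, mul_rpow pi_pos.le (by positivity),
      ← rpow_mul hx.le, mul_left_comm, ← rpow_add hx]
    congr 2
    field_simp
    ring
  calc x * x ^ (1 / (k + 1)) / 2 + W * Φ (x / W)
      ≤ x * x ^ (1 / (k + 1)) / 2 + W * (c₂ * (x / W) ^ (1 + 1 / k)) := by
        gcongr
        exact hupp _ (by positivity)
    _ = (1 / 2 + c₂ * π ^ (-(1 / k))) * x ^ (1 + 1 / (k + 1)) := by
        rw [mul_left_comm, hterm, rpow_add hx, rpow_one]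
        ring

lemma mul_rpow_le_of_rpow_add_one_le {n D x S : ℝ} (hn : 0 < n) (hD : 0 < D) (hx : 0 ≤ x)
    (hS : 0 ≤ S) (h : x ^ (n + 1) ≤ D * S ^ n) : D ^ (-(1 / n)) * x ^ (1 + 1 / n) ≤ S := by
  have h' := rpow_le_rpow (by positivity) h (one_div_nonneg.2 hn.le)
  rw [mul_rpow hD.le (by positivity), ← rpow_mul hS, ← rpow_mul hx, mul_one_div_cancel hn.ne',
    rpow_one] at h'
  rwa [rpow_neg hD.le, inv_mul_le_iff₀ (by positivity),
    show 1 + 1 / n = (n + 1) * (1 / n) by field_simp]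

lemma Gset.half_le_Lp_mul_kinetic {Φ : ℝ → ℝ} {k c₁ : ℝ} (hk : 0 < k) (hc₁ : 0 < c₁)
    (hΦ : ∀ x, 0 ≤ x → 0 ≤ Φ x) (hlow : ∀ x, 0 ≤ x → c₁ * x ^ (1 + 1 / k) ≤ Φ x)
    {x : ℝ} (hx : 0 < x) {g : Plane → ℝ} (hg : g ∈ Gset Φ x) :
    x / 2 ≤ (∫ v, g v ^ (1 + 1 / k)) ^ (1 / (1 + 1 / k)) *
      (2 * π * (∫ v, ‖v‖ ^ 2 * g v) / x) ^ (1 / (k + 1)) := by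
  have hp : 0 < 1 + 1 / k := by positivity
  have hpq : (1 + 1 / k).HolderConjugate (k + 1) :=
    (holderConjugate_iff_eq_conjExponent (by simpa using hk)).2 (by field_simp; ring)
  set T := ∫ v, ‖v‖ ^ 2 * g v
  have hT : 0 < T := Gset.integral_kinetic_pos hΦ hg hx.ne'
  have hR2 : √(2 * T / x) ^ 2 = 2 * T / x := sq_sqrt (by positivity)
  have := integral_le_Lp_mul_measureReal_closedBall_add hpq (fun v => hg.2.1 v) hg.1
    (Gset.memLp hp hc₁ hΦ hlow hg) (Gset.integrable_kinetic hΦ hg)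
    (R := √(2 * T / x)) (sqrt_pos.2 (by positivity)) measure_closedBall_lt_top.ne
  rw [hg.2.2.2, measureReal_closedBall_plane 0 (sqrt_nonneg _), hR2] at this
  change x ≤ _ + T / _ at this
  have hhalf : T / (2 * T / x) = x / 2 := by field_simp
  rw [hhalf, show π * (2 * T / x) = 2 * π * T / x by ring] at this
  linarith

lemma rpow_le_Ifun {Φ : ℝ → ℝ} {k c₁ : ℝ} (hk : 0 < k) (hc₁ : 0 < c₁)
    (hΦ : ∀ x, 0 ≤ x → 0 ≤ Φ x) (hlow : ∀ x, 0 ≤ x → c₁ * x ^ (1 + 1 / k) ≤ Φ x)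
    {x : ℝ} (hx : 0 < x) {g : Plane → ℝ} (hg : g ∈ Gset Φ x) :
    (8 * π * (2 / c₁) ^ k) ^ (-(1 / (k + 1))) * x ^ (1 + 1 / (k + 1)) ≤ Ifun Φ g := by
  have hmass := Gset.half_le_Lp_mul_kinetic hk hc₁ hΦ hlow hx hg
  set S := Ifun Φ g
  set T := ∫ v, ‖v‖ ^ 2 * g v
  set A := ∫ v, g v ^ (1 + 1 / k)
  have hT : 0 < T := Gset.integral_kinetic_pos hΦ hg hx.ne'
  have hA : 0 ≤ A := integral_nonneg fun v => rpow_nonneg (hg.2.1 v) _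
  have hC : 0 ≤ ∫ v, Φ (g v) := integral_nonneg fun v => hΦ _ (hg.2.1 v)
  have hSeq : S = T / 2 + ∫ v, Φ (g v) := Gset.Ifun_eq_add hΦ hg
  have hTS : T ≤ 2 * S := by linarith
  have hS : 0 ≤ S := by linarith
  have hAS : A ≤ S / c₁ := by
    rw [le_div_iff₀' hc₁]
    linarith [Gset.mul_integral_rpow_le (by positivity) hc₁ hΦ hlow hg]
  have hpow := rpow_le_rpow (by positivity) hmass (by positivity : (0 : ℝ) ≤ k + 1)
  have hk' : 1 / (1 + 1 / k) * (k + 1) = k := by field_simp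
  rw [div_rpow hx.le zero_le_two, mul_rpow (by positivity) (by positivity), ← rpow_mul hA,
    ← rpow_mul (by positivity), one_div_mul_cancel (by positivity), rpow_one, hk',
    div_le_iff₀ (by positivity), rpow_add_one two_ne_zero] at hpow
  refine mul_rpow_le_of_rpow_add_one_le (by positivity) (by positivity) hx.le hS ?_
  calc x ^ (k + 1 + 1) = x ^ (k + 1) * x := rpow_add_one hx.ne' _
    _ ≤ A ^ k * (2 * π * T / x) * (2 ^ k * 2) * x := by gcongr
    _ = 4 * π * (2 ^ k * A ^ k) * T := by field_simp; ring
    _ ≤ 4 * π * (2 ^ k * (S / c₁) ^ k) * (2 * S) := by gcongr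
    _ = 8 * π * (2 / c₁) ^ k * S ^ (k + 1) := by
      rw [← mul_rpow zero_le_two (by positivity), rpow_add_one' hS (by positivity),
        show 2 * (S / c₁) = 2 / c₁ * S by ring, mul_rpow (by positivity) hS]
      ring

lemma rpow_le_Psi {Φ : ℝ → ℝ} {k c₁ : ℝ} (hk : 0 < k) (hc₁ : 0 < c₁)
    (hΦ : ∀ x, 0 ≤ x → 0 ≤ Φ x) (hΦ0 : Φ 0 = 0)
    (hlow : ∀ x, 0 ≤ x → c₁ * x ^ (1 + 1 / k) ≤ Φ x) {x : ℝ} (hx : 0 ≤ x) :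
    (8 * π * (2 / c₁) ^ k) ^ (-(1 / (k + 1))) * x ^ (1 + 1 / (k + 1)) ≤ Psi Φ x := by
  rcases hx.eq_or_lt with rfl | hx
  · rw [zero_rpow (by positivity), mul_zero]
    exact Psi_nonneg hΦ
  refine le_csInf ⟨_, _, uniformBallDensity_mem_Gset hΦ0 hx.le one_pos, rfl⟩ ?_
  rintro _ ⟨g, hg, rfl⟩
  exact rpow_le_Ifun hk hc₁ hΦ hlow hx hg

theorem psi_two_sided_growth_general
    (k n c₁ c₂ : ℝ) (hk : 0 < k) (hn : n = k + 1) (hc₁ : 0 < c₁) (hc₂ : 0 < c₂)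
    (Φ : ℝ → ℝ)
    (hPhiNonneg : ∀ x : ℝ, 0 ≤ x → 0 ≤ Φ x)
    (hPhi0 : Φ 0 = 0)
    (hlow : ∀ x : ℝ, 0 ≤ x → c₁ * x ^ (1 + 1 / k) ≤ Φ x)
    (hupp : ∀ x : ℝ, 0 ≤ x → Φ x ≤ c₂ * x ^ (1 + 1 / k)) :
    ∃ C₁ > (0 : ℝ), ∃ C₂ > (0 : ℝ), ∀ x : ℝ, 0 ≤ x →
      C₁ * x ^ (1 + 1 / n) ≤ Psi Φ x ∧ Psi Φ x ≤ C₂ * x ^ (1 + 1 / n) := by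
  subst hn
  refine ⟨(8 * π * (2 / c₁) ^ k) ^ (-(1 / (k + 1))), by positivity,
    1 / 2 + c₂ * π ^ (-(1 / k)), by positivity, fun x hx => ⟨?_, ?_⟩⟩
  · exact rpow_le_Psi hk hc₁ hPhiNonneg hPhi0 hlow hx
  · exact Psi_le_rpow hk hPhiNonneg hPhi0 hupp hx

theorem psi_two_sided_growth
    (k n c₁ c₂ : ℝ) (hk : 0 < k) (hn : n = k + 1) (hc₁ : 0 < c₁) (hc₂ : 0 < c₂)
    (Φ : ℝ → ℝ)
    (hPhiConv : StrictConvexOn ℝ (Set.Ici 0) Φ)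
    (hPhiC1 : ContDiffOn ℝ 1 Φ (Set.Ici 0))
    (hPhiNonneg : ∀ x : ℝ, 0 ≤ x → 0 ≤ Φ x)
    (hPhi0 : Φ 0 = 0)
    (hPhi'0 : derivWithin Φ (Set.Ici 0) 0 = 0)
    (hlow : ∀ x : ℝ, 0 ≤ x → c₁ * x ^ (1 + 1 / k) ≤ Φ x)
    (hupp : ∀ x : ℝ, 0 ≤ x → Φ x ≤ c₂ * x ^ (1 + 1 / k)) :
    ∃ C₁ > (0 : ℝ), ∃ C₂ > (0 : ℝ), ∀ x : ℝ, 0 ≤ x →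
      C₁ * x ^ (1 + 1 / n) ≤ Psi Φ x ∧ Psi Φ x ≤ C₂ * x ^ (1 + 1 / n) :=
  psi_two_sided_growth_general k n c₁ c₂ hk hn hc₁ hc₂ Φ hPhiNonneg hPhi0 hlow hupp
end
end

section
/- Let k ∈ (0,1) and let Φ ∈ C²([0,∞)) be such that Φ(0) = Φ'(0) = 0, Φ''(x) > 0 for all x ∈ [0,∞), and Φ(x) ≥ c x^{1+1/k} for all sufficiently large x (so that Φ' and Ψ' are increasing bijections of [0,∞)). Then (Ψ')⁻¹ is continuously differentiable on [0,∞). -/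
open MeasureTheory Filter Real Set
open scoped Topology ENNReal NNReal RealInnerProductSpace

noncomputable section

/-!
For `λ ≥ 0` let `g_λ(v) = (Φ')⁻¹((λ - |v|²/2)₊)`. Since `Φ` is convex, `g_λ(v)` minimises
`b ↦ (|v|²/2) b + Φ b - λ b` over `b ≥ 0` for every `v`; integrating over `v` gives
`Ψ(m λ) + λ (r - m λ) ≤ Ψ r` for every `r ≥ 0`, where `m λ = ∫ g_λ = 2π ∫₀^λ (Φ')⁻¹` by polar
coordinates. So `Ψ` has at each `r ≥ 0` a supporting line whose slope `m⁻¹ r` depends continuously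
on `r`, hence `Ψ' = m⁻¹` on `[0, ∞)` and `(Ψ')⁻¹ = m`, which is `C¹` with `m' = 2π (Φ')⁻¹`.
The superlinear growth of `Φ` makes `Φ'`, and then `m`, unbounded, so both inverses are defined on
all of `[0, ∞)`.
-/

theorem hasDerivWithinAt_of_forall_add_mul_sub_le {f L : ℝ → ℝ} {s : Set ℝ} {x : ℝ} (hx : x ∈ s)
    (hL : ContinuousWithinAt L s x) (hsupp : ∀ y ∈ s, ∀ z ∈ s, f y + L y * (z - y) ≤ f z) :
    HasDerivWithinAt f (L x) s x := by
  rw [hasDerivWithinAt_iff_isLittleO, Asymptotics.isLittleO_iff]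
  intro ε hε
  have hLε : ∀ᶠ y in 𝓝[s] x, |L y - L x| ≤ ε :=
    hL.eventually (Metric.closedBall_mem_nhds (L x) hε)
  filter_upwards [hLε, self_mem_nhdsWithin] with y hy hys
  have hlow := hsupp x hx y hys
  have hupp := hsupp y hys x hx
  -- the supporting lines at `x` and `y` trap the remainder between `0` and `(L y - L x) (y - x)`
  have hrem : |f y - f x - (y - x) • L x| ≤ |L y - L x| * |y - x| := by
    rw [smul_eq_mul, abs_of_nonneg (by linarith), ← abs_mul]
    exact le_trans (by linarith) (le_abs_self _)
  simpa only [Real.norm_eq_abs] using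
    hrem.trans (mul_le_mul_of_nonneg_right hy (abs_nonneg _))

theorem exists_continuous_rightInverse_Ici {f : ℝ → ℝ} (hc : ContinuousOn f (Ici 0))
    (hm : StrictMonoOn f (Ici 0)) (h0 : f 0 = 0) (htop : Tendsto f atTop atTop) :
    ∃ g : ℝ → ℝ, Continuous g ∧ Monotone g ∧ (∀ t, 0 ≤ g t) ∧ (∀ t ≤ 0, g t = 0) ∧
      ∀ t, 0 ≤ t → f (g t) = t := by
  -- extend `f` to a strictly monotone bijection of `ℝ` by the identity on `(-∞, 0]`
  set A : ℝ → ℝ := fun x => f (max x 0) + min x 0 with hA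
  have hAf : ∀ x, 0 ≤ x → A x = f x := fun x hx => by simp [hA, hx]
  have hAmono : StrictMono A := by
    intro x y hxy
    have hf : f (max x 0) ≤ f (max y 0) :=
      hm.monotoneOn (le_max_right x 0) (le_max_right y 0) (max_le_max_right 0 hxy.le)
    rcases lt_or_ge x 0 with hx | hx
    · show f (max x 0) + min x 0 < f (max y 0) + min y 0
      rw [min_eq_left hx.le]
      exact add_lt_add_of_le_of_lt hf (lt_min hxy hx)
    · show A x < A y
      rw [hAf x hx, hAf y (hx.trans hxy.le)]
      exact hm hx (hx.trans hxy.le) hxy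
  have hAcont : Continuous A :=
    (hc.comp_continuous (continuous_id.max continuous_const) fun x => le_max_right x 0).add
      (continuous_id.min continuous_const)
  have hAsurj : Function.Surjective A := by
    refine hAcont.surjective ?_ ?_
    · exact htop.congr' (eventually_ge_atTop 0 |>.mono fun x hx => (hAf x hx).symm)
    · refine tendsto_id.congr' (eventually_le_atBot 0 |>.mono fun x hx => ?_)
      simp [hA, hx, h0]
  set e := hAmono.orderIsoOfSurjective A hAsurj
  have he0 : e.symm 0 = 0 := e.symm_apply_eq.2 (by simp [e, hA, h0])
  have hnn : ∀ t, 0 ≤ e.symm (max t 0) := fun t =>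
    he0.ge.trans (e.symm.monotone (le_max_right t 0))
  refine ⟨fun t => e.symm (max t 0), e.symm.continuous.comp (continuous_id.max continuous_const),
    fun s t hst => e.symm.monotone (max_le_max_right 0 hst), hnn,
    fun t ht => by simp [max_eq_right ht, he0], fun t ht => ?_⟩
  rw [← hAf _ (hnn t), max_eq_left ht]
  exact e.apply_symm_apply t

theorem strictMonoOn_Ici_of_derivWithin_pos {g : ℝ → ℝ} {a : ℝ} (hg : ContinuousOn g (Ici a))
    (hg' : ∀ x ∈ Ioi a, 0 < derivWithin g (Ici a) x) : StrictMonoOn g (Ici a) :=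
  strictMonoOn_of_deriv_pos (convex_Ici a) hg fun x hx => by
    rw [interior_Ici] at hx
    rw [← derivWithin_of_mem_nhds (Ici_mem_nhds hx)]
    exact hg' x hx

theorem convexOn_Ici_of_monotoneOn_derivWithin {f : ℝ → ℝ} {a : ℝ}
    (hf : DifferentiableOn ℝ f (Ici a)) (hf' : MonotoneOn (derivWithin f (Ici a)) (Ici a)) :
    ConvexOn ℝ (Ici a) f := by
  refine MonotoneOn.convexOn_of_deriv (convex_Ici a) hf.continuousOn
    (hf.mono interior_subset) fun x hx y hy hxy => ?_
  rw [interior_Ici] at hx hy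
  rw [← derivWithin_of_mem_nhds (Ici_mem_nhds hx), ← derivWithin_of_mem_nhds (Ici_mem_nhds hy)]
  exact hf' (mem_Ici.2 hx.le) (mem_Ici.2 hy.le) hxy

theorem ConvexOn.add_derivWithin_mul_sub_le {f : ℝ → ℝ} {S : Set ℝ} (hf : ConvexOn ℝ S f)
    {x y : ℝ} (hx : x ∈ S) (hy : y ∈ S) (hfx : DifferentiableWithinAt ℝ f S x) :
    f x + derivWithin f S x * (y - x) ≤ f y := by
  rcases lt_trichotomy x y with hxy | rfl | hxy
  · have h := hf.derivWithin_le_slope hx hy hxy hfx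
    rw [slope_def_field, le_div_iff₀ (sub_pos.2 hxy)] at h
    linarith
  · simp
  · have h := hf.slope_le_derivWithin hy hx hxy hfx
    rw [slope_def_field, div_le_iff₀ (sub_pos.2 hxy)] at h
    linarith

theorem tendsto_derivWithin_atTop_of_le_rpow {f : ℝ → ℝ} (hf : ConvexOn ℝ (Ici 0) f)
    (hfd : DifferentiableOn ℝ f (Ici 0)) {c p : ℝ} (hc : 0 < c) (hp : 1 < p)
    (hgrowth : ∀ᶠ x in atTop, c * x ^ p ≤ f x) :
    Tendsto (derivWithin f (Ici 0)) atTop atTop := by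
  have hlow : Tendsto (fun x => c * x ^ (p - 1) - f 0 / x) atTop atTop := by
    simp_rw [sub_eq_add_neg]
    exact ((tendsto_rpow_atTop (sub_pos.2 hp)).const_mul_atTop hc).atTop_add
      (tendsto_const_nhds.div_atTop tendsto_id).neg
  refine tendsto_atTop_mono' atTop ?_ hlow
  filter_upwards [hgrowth, eventually_gt_atTop 0] with x hgx hx
  -- the tangent line at `x` passes below `f 0`
  have htan := hf.add_derivWithin_mul_sub_le (mem_Ici.2 hx.le) self_mem_Ici (hfd x hx.le)
  rw [Real.rpow_sub_one hx.ne', mul_div_assoc', div_sub_div_same, div_le_iff₀ hx]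
  linarith

theorem eqOn_invDerivOn_of_derivWithin_eq {F R m : ℝ → ℝ}
    (hF : ∀ x, 0 ≤ x → derivWithin F (Ici 0) x = R x) (hm0 : m 0 = 0)
    (hmnn : ∀ y, 0 ≤ y → 0 ≤ m y) (hRm : ∀ y, 0 ≤ y → R (m y) = y)
    (hmR : ∀ x, 0 ≤ x → m (R x) = x) :
    EqOn (invDerivOn F) m (Ici 0) := by
  intro y (hy : 0 ≤ y)
  rcases hy.eq_or_lt with rfl | hy
  · simp [invDerivOn, hm0]
  set x := Function.invFun (derivWithin F (Ici 0)) y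
  have hx : derivWithin F (Ici 0) x = y :=
    Function.invFun_eq ⟨m y, (hF _ (hmnn y hy.le)).trans (hRm y hy.le)⟩
  have hx0 : 0 ≤ x := by
    by_contra! hneg
    rw [derivWithin_zero_of_notMem_closure (by simpa using hneg)] at hx
    exact hy.ne hx
  change (if y ≤ 0 then 0 else x) = m y
  rw [if_neg hy.not_ge, ← hmR x hx0, ← hF x hx0, hx]

theorem image_half_sq_Ioi : (fun y : ℝ => y ^ 2 / 2) '' Ioi 0 = Ioi 0 := by
  ext s
  constructor
  · rintro ⟨y, hy : 0 < y, rfl⟩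
    show 0 < y ^ 2 / 2
    positivity
  · intro (hs : 0 < s)
    refine ⟨√(2 * s), Real.sqrt_pos.2 (by positivity), ?_⟩
    simp only
    rw [Real.sq_sqrt (by positivity)]
    ring

theorem integral_comp_half_sq_norm (F : ℝ → ℝ) :
    ∫ v : Plane, F (‖v‖ ^ 2 / 2) = 2 * π * ∫ s in Ioi 0, F s := by
  have hinj : InjOn (fun y : ℝ => y ^ 2 / 2) (Ioi 0) := fun x (hx : 0 < x) y (hy : 0 < y) hxy => by
    have hsq : x ^ 2 = y ^ 2 := by simp only at hxy; linarith
    exact (pow_left_inj₀ hx.le hy.le two_ne_zero).1 hsq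
  have hsubst := integral_image_eq_integral_abs_deriv_smul measurableSet_Ioi
    (fun y _ => ((hasDerivAt_pow 2 y).div_const 2).hasDerivWithinAt) hinj F
  rw [image_half_sq_Ioi] at hsubst
  rw [hsubst, integral_fun_norm_addHaar (volume : Measure Plane) (fun r => F (r ^ 2 / 2)),
    finrank_euclideanSpace_fin, measureReal_def, EuclideanSpace.volume_ball_fin_two]
  have habs : ∫ y in Ioi (0 : ℝ), |y| * F (y ^ 2 / 2) = ∫ y in Ioi (0 : ℝ), y * F (y ^ 2 / 2) :=
    setIntegral_congr_fun measurableSet_Ioi fun y (hy : 0 < y) => by rw [abs_of_pos hy]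
  simp [habs, ENNReal.toReal_ofReal pi_nonneg, mul_assoc]

def profileMass (ψ : ℝ → ℝ) (l : ℝ) : ℝ := 2 * π * ∫ t in (0 : ℝ)..l, ψ t

/-- With `ψ = (Φ')⁻¹` on `[0, ∞)` and `ψ = 0` below, this is the minimiser `g_l` of the problem
defining `Ψ` at mass `profileMass ψ l`. -/
def profileDensity (ψ : ℝ → ℝ) (l : ℝ) (v : Plane) : ℝ := ψ (l - ‖v‖ ^ 2 / 2)

section profile

variable {ψ : ℝ → ℝ}

theorem hasDerivAt_profileMass (hψ : Continuous ψ) (l : ℝ) :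
    HasDerivAt (profileMass ψ) (2 * π * ψ l) l :=
  (hψ.integral_hasStrictDerivAt 0 l).hasDerivAt.const_mul (2 * π)

theorem contDiff_profileMass (hψ : Continuous ψ) : ContDiff ℝ 1 (profileMass ψ) := by
  rw [contDiff_one_iff_deriv]
  refine ⟨fun l => (hasDerivAt_profileMass hψ l).differentiableAt, ?_⟩
  rw [funext fun l => (hasDerivAt_profileMass hψ l).deriv]
  exact continuous_const.mul hψ

theorem strictMonoOn_profileMass (hψ : Continuous ψ) (hpos : ∀ t, 0 < t → 0 < ψ t) :
    StrictMonoOn (profileMass ψ) (Ici 0) :=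
  strictMonoOn_of_deriv_pos (convex_Ici 0) (contDiff_profileMass hψ).continuous.continuousOn
    fun l hl => by
      rw [interior_Ici] at hl
      rw [(hasDerivAt_profileMass hψ l).deriv]
      exact mul_pos two_pi_pos (hpos l hl)

theorem tendsto_profileMass_atTop (hψ : Continuous ψ) (hmono : Monotone ψ) (h1 : 0 < ψ 1) :
    Tendsto (profileMass ψ) atTop atTop := by
  have hlin : ∀ y, 1 ≤ y → profileMass ψ 1 + 2 * π * ψ 1 * (y - 1) ≤ profileMass ψ y := by
    intro y hy
    have := (convex_Ici 1).mul_sub_le_image_sub_of_le_deriv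
      (contDiff_profileMass hψ).continuous.continuousOn
      (fun l _ => (hasDerivAt_profileMass hψ l).differentiableAt.differentiableWithinAt)
      (C := 2 * π * ψ 1) (fun l hl => by
        rw [interior_Ici] at hl
        rw [(hasDerivAt_profileMass hψ l).deriv]
        exact mul_le_mul_of_nonneg_left (hmono (le_of_lt hl)) two_pi_pos.le)
      1 self_mem_Ici y hy hy
    linarith
  refine tendsto_atTop_mono' atTop (eventually_ge_atTop 1 |>.mono hlin) ?_
  exact tendsto_atTop_add_const_left _ _
    ((tendsto_atTop_add_const_right _ _ tendsto_id).const_mul_atTop (by positivity))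

theorem setIntegral_Ioi_comp_sub_eq_intervalIntegral (hψ0 : ∀ t ≤ 0, ψ t = 0) {l : ℝ} (hl : 0 ≤ l) :
    ∫ s in Ioi 0, ψ (l - s) = ∫ t in (0 : ℝ)..l, ψ t := by
  rw [setIntegral_eq_of_subset_of_forall_sdiff_eq_zero measurableSet_Ioi Ioc_subset_Ioi_self
      fun s hs => hψ0 _ (sub_nonpos.2 (not_le.1 fun h => hs.2 ⟨hs.1, h⟩).le),
    ← intervalIntegral.integral_of_le hl, intervalIntegral.integral_comp_sub_left]
  simp

theorem integral_profileDensity (hψ0 : ∀ t ≤ 0, ψ t = 0) {l : ℝ} (hl : 0 ≤ l) :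
    ∫ v, profileDensity ψ l v = profileMass ψ l := by
  rw [profileMass, ← setIntegral_Ioi_comp_sub_eq_intervalIntegral hψ0 hl,
    ← integral_comp_half_sq_norm]
  rfl

theorem hasCompactSupport_profileDensity (hψ0 : ∀ t ≤ 0, ψ t = 0) (l : ℝ) :
    HasCompactSupport (profileDensity ψ l) := by
  refine HasCompactSupport.intro (isCompact_closedBall (0 : Plane) √(2 * |l|)) fun v hv => hψ0 _ ?_
  rw [Metric.mem_closedBall, dist_zero_right, not_le] at hv
  rw [Real.sqrt_lt' ((Real.sqrt_nonneg _).trans_lt hv)] at hv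
  linarith [le_abs_self l]

end profile

section minimizer

variable {Φ Φ' ψ : ℝ → ℝ}

theorem profileDensity_mem_Gset (hΦ : ContinuousOn Φ (Ici 0)) (hΦ0 : Φ 0 = 0)
    (hψ : Continuous ψ) (hψnn : ∀ t, 0 ≤ ψ t) (hψ0 : ∀ t ≤ 0, ψ t = 0) {l : ℝ} (hl : 0 ≤ l) :
    profileDensity ψ l ∈ Gset Φ (profileMass ψ l) := by
  have hcont : Continuous (profileDensity ψ l) := hψ.comp (by fun_prop)
  have hsupp := hasCompactSupport_profileDensity hψ0 l
  refine ⟨hcont.integrable_of_hasCompactSupport hsupp, fun v => hψnn _, ?_,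
    integral_profileDensity hψ0 hl⟩
  refine Continuous.integrable_of_hasCompactSupport ?_ (hsupp.mul_left.add (hsupp.comp_left hΦ0))
  exact (((continuous_norm.pow 2).div_const 2).mul hcont).add
    (hΦ.comp_continuous hcont fun v => hψnn _)

theorem sub_mul_le_of_subgradient (hgrad : ∀ a b, 0 ≤ a → 0 ≤ b → Φ a + Φ' a * (b - a) ≤ Φ b)
    (hΦ'0 : Φ' 0 = 0) (hψnn : ∀ t, 0 ≤ ψ t) (hψ0 : ∀ t ≤ 0, ψ t = 0)
    (hΦ'ψ : ∀ t, 0 ≤ t → Φ' (ψ t) = t) (s : ℝ) {b : ℝ} (hb : 0 ≤ b) :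
    Φ (ψ s) - s * ψ s ≤ Φ b - s * b := by
  rcases le_total 0 s with hs | hs
  · have h := hgrad (ψ s) b (hψnn s) hb
    rw [hΦ'ψ s hs] at h
    linarith
  · have h := hgrad 0 b le_rfl hb
    rw [hΦ'0] at h
    rw [hψ0 s hs]
    nlinarith

theorem Ifun_profileDensity_sub_le (hΦ : ContinuousOn Φ (Ici 0)) (hΦ0 : Φ 0 = 0)
    (hgrad : ∀ a b, 0 ≤ a → 0 ≤ b → Φ a + Φ' a * (b - a) ≤ Φ b) (hΦ'0 : Φ' 0 = 0)
    (hψ : Continuous ψ) (hψnn : ∀ t, 0 ≤ ψ t) (hψ0 : ∀ t ≤ 0, ψ t = 0)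
    (hΦ'ψ : ∀ t, 0 ≤ t → Φ' (ψ t) = t) {l r : ℝ} (hl : 0 ≤ l) {g : Plane → ℝ}
    (hg : g ∈ Gset Φ r) :
    Ifun Φ (profileDensity ψ l) - l * profileMass ψ l ≤ Ifun Φ g - l * r := by
  obtain ⟨hgi, hgnn, hge, hgr⟩ := hg
  obtain ⟨hdi, -, hde, hdr⟩ := profileDensity_mem_Gset hΦ hΦ0 hψ hψnn hψ0 hl
  rw [← hgr, ← hdr, Ifun, Ifun, ← integral_const_mul, ← integral_const_mul,
    ← integral_sub hde (hdi.const_mul l), ← integral_sub hge (hgi.const_mul l)]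
  refine integral_mono (hde.sub (hdi.const_mul l)) (hge.sub (hgi.const_mul l)) fun v => ?_
  -- pointwise, `profileDensity ψ l v` minimises `b ↦ Φ b - (l - |v|²/2) b` over `b ≥ 0`
  have h := sub_mul_le_of_subgradient hgrad hΦ'0 hψnn hψ0 hΦ'ψ (l - ‖v‖ ^ 2 / 2) (hgnn v)
  simp only [profileDensity]
  linarith

theorem Psi_profileMass (hΦ : ContinuousOn Φ (Ici 0)) (hΦ0 : Φ 0 = 0)
    (hgrad : ∀ a b, 0 ≤ a → 0 ≤ b → Φ a + Φ' a * (b - a) ≤ Φ b) (hΦ'0 : Φ' 0 = 0)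
    (hψ : Continuous ψ) (hψnn : ∀ t, 0 ≤ ψ t) (hψ0 : ∀ t ≤ 0, ψ t = 0)
    (hΦ'ψ : ∀ t, 0 ≤ t → Φ' (ψ t) = t) {l : ℝ} (hl : 0 ≤ l) :
    Psi Φ (profileMass ψ l) = Ifun Φ (profileDensity ψ l) := by
  refine IsLeast.csInf_eq ⟨⟨_, profileDensity_mem_Gset hΦ hΦ0 hψ hψnn hψ0 hl, rfl⟩, ?_⟩
  rintro _ ⟨g, hg, rfl⟩
  simpa using Ifun_profileDensity_sub_le hΦ hΦ0 hgrad hΦ'0 hψ hψnn hψ0 hΦ'ψ hl hg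

theorem Psi_profileMass_add_mul_le (hΦ : ContinuousOn Φ (Ici 0)) (hΦ0 : Φ 0 = 0)
    (hgrad : ∀ a b, 0 ≤ a → 0 ≤ b → Φ a + Φ' a * (b - a) ≤ Φ b) (hΦ'0 : Φ' 0 = 0)
    (hψ : Continuous ψ) (hψnn : ∀ t, 0 ≤ ψ t) (hψ0 : ∀ t ≤ 0, ψ t = 0)
    (hΦ'ψ : ∀ t, 0 ≤ t → Φ' (ψ t) = t) {l l' : ℝ} (hl : 0 ≤ l) (hl' : 0 ≤ l') :
    Psi Φ (profileMass ψ l) + l * (profileMass ψ l' - profileMass ψ l) ≤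
      Psi Φ (profileMass ψ l') := by
  rw [Psi_profileMass hΦ hΦ0 hgrad hΦ'0 hψ hψnn hψ0 hΦ'ψ hl,
    Psi_profileMass hΦ hΦ0 hgrad hΦ'0 hψ hψnn hψ0 hΦ'ψ hl']
  have := Ifun_profileDensity_sub_le hΦ hΦ0 hgrad hΦ'0 hψ hψnn hψ0 hΦ'ψ hl
    (profileDensity_mem_Gset hΦ hΦ0 hψ hψnn hψ0 hl')
  linarith

end minimizer

theorem eqOn_invDerivOn_Psi_profileMass {Φ Φ' ψ : ℝ → ℝ} (hΦ : ContinuousOn Φ (Ici 0))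
    (hΦ0 : Φ 0 = 0) (hgrad : ∀ a b, 0 ≤ a → 0 ≤ b → Φ a + Φ' a * (b - a) ≤ Φ b)
    (hΦ'0 : Φ' 0 = 0) (hψ : Continuous ψ) (hψmono : Monotone ψ) (hψnn : ∀ t, 0 ≤ ψ t)
    (hψ0 : ∀ t ≤ 0, ψ t = 0) (hΦ'ψ : ∀ t, 0 ≤ t → Φ' (ψ t) = t) :
    EqOn (invDerivOn (Psi Φ)) (profileMass ψ) (Ici 0) := by
  have hψpos : ∀ t, 0 < t → 0 < ψ t := fun t ht =>
    (hψnn t).lt_of_ne fun h => ht.ne (by rw [← hΦ'ψ t ht.le, ← h, hΦ'0])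
  have hm := strictMonoOn_profileMass hψ hψpos
  have hm0 : profileMass ψ 0 = 0 := by simp [profileMass]
  have hmnn : ∀ l, 0 ≤ l → 0 ≤ profileMass ψ l := fun l hl =>
    hm0 ▸ hm.monotoneOn self_mem_Ici hl hl
  obtain ⟨R, hRc, -, hRnn, -, hmR⟩ := exists_continuous_rightInverse_Ici
    (contDiff_profileMass hψ).continuous.continuousOn hm hm0
    (tendsto_profileMass_atTop hψ hψmono (hψpos 1 one_pos))
  have hRm : ∀ l, 0 ≤ l → R (profileMass ψ l) = l := fun l hl =>
    hm.injOn (hRnn _) hl (hmR _ (hmnn l hl))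
  have hsupp : ∀ x ∈ Ici (0 : ℝ), ∀ y ∈ Ici (0 : ℝ), Psi Φ x + R x * (y - x) ≤ Psi Φ y :=
    fun x hx y hy => by
      simpa only [hmR x hx, hmR y hy] using
        Psi_profileMass_add_mul_le hΦ hΦ0 hgrad hΦ'0 hψ hψnn hψ0 hΦ'ψ (hRnn x) (hRnn y)
  refine eqOn_invDerivOn_of_derivWithin_eq (fun x hx => ?_) hm0 hmnn hRm hmR
  exact (hasDerivWithinAt_of_forall_add_mul_sub_le hx hRc.continuousWithinAt hsupp).derivWithin
    (uniqueDiffOn_Ici 0 x hx)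

theorem inverse_psi_deriv_C1_general
    (k c : ℝ) (hk0 : 0 < k) (hc : 0 < c)
    (Φ : ℝ → ℝ)
    (hPhiC2 : ContDiffOn ℝ 2 Φ (Set.Ici 0))
    (hPhi0 : Φ 0 = 0)
    (hPhi'0 : derivWithin Φ (Set.Ici 0) 0 = 0)
    (hPhi'' : ∀ x ∈ Set.Ici (0 : ℝ),
      0 < derivWithin (derivWithin Φ (Set.Ici 0)) (Set.Ici 0) x)
    (hPhiGrowth : ∃ x₀ : ℝ, ∀ x : ℝ, x₀ ≤ x → c * x ^ (1 + 1 / k) ≤ Φ x)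
 :
    ContDiffOn ℝ 1 (invDerivOn (Psi Φ)) (Set.Ici 0) := by
  have hΦd : DifferentiableOn ℝ Φ (Ici 0) := hPhiC2.differentiableOn (by norm_num)
  have hΦ' : ContinuousOn (derivWithin Φ (Ici 0)) (Ici 0) :=
    hPhiC2.continuousOn_derivWithin (uniqueDiffOn_Ici 0) (by norm_num)
  have hΦ'mono : StrictMonoOn (derivWithin Φ (Ici 0)) (Ici 0) :=
    strictMonoOn_Ici_of_derivWithin_pos hΦ' fun x hx => hPhi'' x (mem_Ici.2 hx.le)
  have hconv : ConvexOn ℝ (Ici 0) Φ :=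
    convexOn_Ici_of_monotoneOn_derivWithin hΦd hΦ'mono.monotoneOn
  obtain ⟨ψ, hψ, hψmono, hψnn, hψ0, hΦ'ψ⟩ := exists_continuous_rightInverse_Ici hΦ' hΦ'mono hPhi'0
    (tendsto_derivWithin_atTop_of_le_rpow hconv hΦd hc (lt_add_of_pos_right 1 (one_div_pos.2 hk0))
      (eventually_atTop.2 hPhiGrowth))
  refine (contDiff_profileMass hψ).contDiffOn.congr ?_
  exact eqOn_invDerivOn_Psi_profileMass hPhiC2.continuousOn hPhi0
    (fun a b ha hb => hconv.add_derivWithin_mul_sub_le ha hb (hΦd a ha)) hPhi'0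
    hψ hψmono hψnn hψ0 hΦ'ψ

theorem inverse_psi_deriv_C1
    (k c : ℝ) (hk0 : 0 < k) (hk1 : k < 1) (hc : 0 < c)
    (Φ : ℝ → ℝ)
    (hPhiC2 : ContDiffOn ℝ 2 Φ (Set.Ici 0))
    (hPhi0 : Φ 0 = 0)
    (hPhi'0 : derivWithin Φ (Set.Ici 0) 0 = 0)
    (hPhi'' : ∀ x ∈ Set.Ici (0 : ℝ),
      0 < derivWithin (derivWithin Φ (Set.Ici 0)) (Set.Ici 0) x)
    (hPhiGrowth : ∃ x₀ : ℝ, ∀ x : ℝ, x₀ ≤ x → c * x ^ (1 + 1 / k) ≤ Φ x)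
 :
    ContDiffOn ℝ 1 (invDerivOn (Psi Φ)) (Set.Ici 0) :=
  inverse_psi_deriv_C1_general k c hk0 hc Φ hPhiC2 hPhi0 hPhi'0 hPhi'' hPhiGrowth
end
end
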